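/- For every natural number n ≥ 1, the number E_n = 3^n + 2 is not a triangular number; that is, there is no natural number k with 3^n + 2 = k(k+1)/2. -/
import Mathlib

theorem E_not_triangular (n : ℕ) (hn : 1 ≤ n) :
    ¬ ∃ k : ℕ, 3 ^ n + 2 = k * (k + 1) / 2 := by
  rintro ⟨k, hk⟩
  have heven : 2 ∣ k * (k + 1) := (Nat.even_mul_succ_self k).two_dvd
  have h2 : k * (k + 1) = 2 * (3 ^ n + 2) := by
    rw [hk, Nat.mul_div_cancel' heven]
  have h3 : (3 : ℕ) ^ n % 3 = 0 := by
    rw [Nat.pow_mod]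
    norm_num [Nat.zero_pow (by omega : 0 < n)]
  have hmod : k * (k + 1) % 3 = (k % 3 * (k % 3 + 1)) % 3 := by
    simp [Nat.mul_mod, Nat.add_mod]
  have hr : k % 3 = 0 ∨ k % 3 = 1 ∨ k % 3 = 2 := by omega
  rcases hr with h | h | h <;> rw [h] at hmod <;> norm_num at hmod <;> omega
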